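/- arXiv:2203.07175 — 3 statements merged into one kernel-verified Lean document; each statement's English description precedes it below -/
import Mathlib

section
/- Let 𝓗 be a real Hilbert space and H : 𝓗 → 𝓗 a continuous linear operator that is self-adjoint, positive semidefinite (⟪H x, x⟫ ≥ 0 for all x), and has closed range. Let b ∈ range(H) and let V̂ ∈ range(H) be the unique element of range(H) with H V̂ = b. For each ε > 0 let V_ε be the unique solution of (H + ε·I) V_ε = b. Then V_ε → V̂ in norm as ε → 0⁺. -/
/-!
Write `V̂ = H u` and `W = V_ε - V̂`. Then `H W = -ε V_ε`, so positivity of `H` gives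
`⟪V_ε, W⟫ ≤ 0`, whence `‖V_ε‖ ≤ ‖V̂‖` and `‖W‖² ≤ ⟪V̂, -W⟫`. By symmetry of `H`,
`⟪H u, -W⟫ = ⟪u, -H W⟫ = ε ⟪u, V_ε⟫ ≤ ε ‖u‖ ‖V̂‖`, so `‖V_ε - V̂‖ = O(√ε)`.
-/

open Filter Topology
open scoped RealInnerProductSpace

section

variable {E : Type*} [NormedAddCommGroup E] [InnerProductSpace ℝ E]

theorem inner_sub_nonpos_of_add_smul_eq (T : E →ₗ[ℝ] E) (hT : ∀ x, 0 ≤ ⟪T x, x⟫) {x y : E}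
    {ε : ℝ} (hε : 0 < ε) (h : T x + ε • x = T y) : ⟪x, x - y⟫ ≤ 0 := by
  have hTxy : T (x - y) = -(ε • x) := by
    rw [map_sub, ← h]
    abel
  have hpos := hT (x - y)
  rw [hTxy, inner_neg_left, real_inner_smul_left] at hpos
  nlinarith

theorem norm_le_of_inner_sub_nonpos {x y : E} (h : ⟪x, x - y⟫ ≤ 0) : ‖x‖ ≤ ‖y‖ := by
  rw [inner_sub_right, real_inner_self_eq_norm_sq] at h
  have hxy := real_inner_le_norm x y
  nlinarith [norm_nonneg x, norm_nonneg y]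

theorem norm_sub_sq_le_of_inner_sub_nonpos {x y : E} (h : ⟪x, x - y⟫ ≤ 0) :
    ‖x - y‖ ^ 2 ≤ ⟪y, y - x⟫ := by
  have hswap : ⟪y, y - x⟫ = -⟪y, x - y⟫ := by rw [← inner_neg_right, neg_sub]
  rw [← real_inner_self_eq_norm_sq, inner_sub_left, hswap]
  linarith

theorem norm_sub_sq_le_of_add_smul_eq (T : E →ₗ[ℝ] E) (hsymm : T.IsSymmetric)
    (hT : ∀ x, 0 ≤ ⟪T x, x⟫) {x u : E} {ε : ℝ} (hε : 0 < ε) (h : T x + ε • x = T (T u)) :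
    ‖x - T u‖ ^ 2 ≤ ε * (‖u‖ * ‖T u‖) := by
  have hnonpos := inner_sub_nonpos_of_add_smul_eq T hT hε h
  have hTsub : T (T u - x) = ε • x := by
    rw [map_sub, ← h]
    abel
  calc ‖x - T u‖ ^ 2 ≤ ⟪T u, T u - x⟫ := norm_sub_sq_le_of_inner_sub_nonpos hnonpos
    _ = ε * ⟪u, x⟫ := by rw [hsymm, hTsub, real_inner_smul_right]
    _ ≤ ε * (‖u‖ * ‖x‖) := by gcongr; exact real_inner_le_norm u x
    _ ≤ ε * (‖u‖ * ‖T u‖) := by gcongr; exact norm_le_of_inner_sub_nonpos hnonpos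

end

theorem tendsto_nhdsGT_zero_of_norm_sub_sq_le {F : Type*} [SeminormedAddCommGroup F]
    {f : ℝ → F} {a : F} (C : ℝ) (h : ∀ ε, 0 < ε → ‖f ε - a‖ ^ 2 ≤ ε * C) :
    Tendsto f (𝓝[>] 0) (𝓝 a) := by
  have hsqrt : Tendsto (fun ε : ℝ => √(ε * C)) (𝓝[>] 0) (𝓝 0) := by
    have hcont : Continuous fun ε : ℝ => √(ε * C) := by fun_prop
    simpa using (hcont.tendsto 0).mono_left nhdsWithin_le_nhds
  rw [tendsto_iff_norm_sub_tendsto_zero]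
  refine squeeze_zero' (Eventually.of_forall fun ε => norm_nonneg _) ?_ hsqrt
  filter_upwards [self_mem_nhdsWithin] with ε hε
  exact Real.le_sqrt_of_sq_le (h ε hε)

theorem stmt_5_general {𝓗 : Type*} [NormedAddCommGroup 𝓗] [InnerProductSpace ℝ 𝓗]
    (H : 𝓗 →L[ℝ] 𝓗)
    (hsa : ∀ x y : 𝓗, ⟪H x, y⟫ = ⟪x, H y⟫)
    (hpsd : ∀ x : 𝓗, 0 ≤ ⟪H x, x⟫)
    (b Vhat : 𝓗) (hVhat : Vhat ∈ LinearMap.range (H : 𝓗 →ₗ[ℝ] 𝓗)) (hHVhat : H Vhat = b)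
    (V : ℝ → 𝓗) (hV : ∀ ε : ℝ, 0 < ε → H (V ε) + ε • V ε = b) :
    Filter.Tendsto V (nhdsWithin 0 (Set.Ioi 0)) (nhds Vhat) := by
  obtain ⟨u, rfl⟩ := hVhat
  subst hHVhat
  exact tendsto_nhdsGT_zero_of_norm_sub_sq_le _ fun ε hε =>
    norm_sub_sq_le_of_add_smul_eq (H : 𝓗 →ₗ[ℝ] 𝓗) hsa hpsd hε (hV ε hε)

/-- Convergence of Tikhonov-regularized solutions to the Moore–Penrose pseudoinverse solution:
if `H` is self-adjoint, positive semidefinite, with closed range, `b ∈ range H`, `V̂ ∈ range H`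
solves `H V̂ = b`, and `V ε` solves `(H + ε I) (V ε) = b` for each `ε > 0`, then
`V ε → V̂` as `ε → 0⁺`. -/
theorem stmt_5 {𝓗 : Type*} [NormedAddCommGroup 𝓗] [InnerProductSpace ℝ 𝓗] [CompleteSpace 𝓗]
    (H : 𝓗 →L[ℝ] 𝓗)
    (hsa : ∀ x y : 𝓗, ⟪H x, y⟫ = ⟪x, H y⟫)
    (hpsd : ∀ x : 𝓗, 0 ≤ ⟪H x, x⟫)
    (hcr : IsClosed (LinearMap.range (H : 𝓗 →ₗ[ℝ] 𝓗) : Set 𝓗))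
    (b Vhat : 𝓗) (hVhat : Vhat ∈ LinearMap.range (H : 𝓗 →ₗ[ℝ] 𝓗)) (hHVhat : H Vhat = b)
    (V : ℝ → 𝓗) (hV : ∀ ε : ℝ, 0 < ε → H (V ε) + ε • V ε = b) :
    Filter.Tendsto V (nhdsWithin 0 (Set.Ioi 0)) (nhds Vhat) :=
  stmt_5_general H hsa hpsd b Vhat hVhat hHVhat V hV
end

section
/- Let 𝓗 be a real Hilbert space and H : 𝓗 → 𝓗 a continuous linear operator that is self-adjoint and positive semidefinite (⟪H x, x⟫ ≥ 0 for all x). If V̂ ∈ range(H), then ε · (H + εI)⁻¹ V̂ → 0 in norm as ε → 0⁺. -/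
open scoped RealInnerProductSpace

/-!
Write `V̂ = H W`. Then `U := Y ε - ε W` solves `(H + εI) U = -ε² W`, and for a positive
semidefinite `H` the operator `H + εI` is bounded below by `ε`, so `‖U‖ ≤ ε ‖W‖` and hence
`‖Y ε‖ ≤ 2 ε ‖W‖`.
-/

section
variable {E : Type*} [NormedAddCommGroup E] [InnerProductSpace ℝ E]

theorem mul_norm_le_norm_add_smul_of_inner_nonneg {T : E → E} (hT : ∀ x, 0 ≤ ⟪T x, x⟫)
    (ε : ℝ) (u : E) : ε * ‖u‖ ≤ ‖T u + ε • u‖ := by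
  have hsq : ε * ‖u‖ * ‖u‖ ≤ ‖T u + ε • u‖ * ‖u‖ :=
    calc ε * ‖u‖ * ‖u‖ ≤ ⟪T u, u⟫ + ε * ‖u‖ ^ 2 := by nlinarith [hT u]
      _ = ⟪T u + ε • u, u⟫ := by
        rw [inner_add_left, real_inner_smul_left, real_inner_self_eq_norm_sq]
      _ ≤ ‖T u + ε • u‖ * ‖u‖ := real_inner_le_norm _ _
  rcases (norm_nonneg u).eq_or_lt with hu | hu
  · rw [← hu, mul_zero]
    exact norm_nonneg _
  · exact le_of_mul_le_mul_right hsq hu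

theorem norm_le_of_apply_add_smul_eq_smul_apply (T : E →ₗ[ℝ] E) (hT : ∀ x, 0 ≤ ⟪T x, x⟫)
    {ε : ℝ} (hε : 0 < ε) {y w : E} (hy : T y + ε • y = ε • T w) : ‖y‖ ≤ 2 * ε * ‖w‖ := by
  set u := y - ε • w
  have hu : T u + ε • u = -(ε ^ 2) • w := by
    simp only [u, map_sub, map_smul, smul_sub]
    rw [sub_add_sub_comm, hy]
    module
  have hu_le : ‖u‖ ≤ ε * ‖w‖ := by
    have h := mul_norm_le_norm_add_smul_of_inner_nonneg hT ε u
    rw [hu, norm_smul, norm_neg, Real.norm_of_nonneg (sq_nonneg ε), sq, mul_assoc] at h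
    exact le_of_mul_le_mul_left h hε
  calc ‖y‖ = ‖u + ε • w‖ := by rw [sub_add_cancel]
    _ ≤ ‖u‖ + ε * ‖w‖ := norm_add_le_of_le le_rfl (norm_smul_of_nonneg hε.le w).le
    _ ≤ 2 * ε * ‖w‖ := by linarith

end

theorem stmt_8_general {𝓗 : Type*} [NormedAddCommGroup 𝓗] [InnerProductSpace ℝ 𝓗]
    (H : 𝓗 →L[ℝ] 𝓗)
    (hpsd : ∀ x : 𝓗, 0 ≤ ⟪H x, x⟫)
    (Vhat : 𝓗) (hVhat : Vhat ∈ LinearMap.range (H : 𝓗 →ₗ[ℝ] 𝓗))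
    (Y : ℝ → 𝓗) (hY : ∀ ε : ℝ, 0 < ε → H (Y ε) + ε • Y ε = ε • Vhat) :
    Filter.Tendsto Y (nhdsWithin 0 (Set.Ioi 0)) (nhds 0) := by
  obtain ⟨W, rfl⟩ := hVhat
  have hbound : ∀ ε ∈ Set.Ioi (0 : ℝ), ‖Y ε‖ ≤ 2 * ε * ‖W‖ := fun ε hε =>
    norm_le_of_apply_add_smul_eq_smul_apply (H : 𝓗 →ₗ[ℝ] 𝓗) hpsd hε (hY ε hε)
  have hlim : Filter.Tendsto (fun ε : ℝ => 2 * ε * ‖W‖) (nhdsWithin 0 (Set.Ioi 0)) (nhds 0) := by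
    apply tendsto_nhdsWithin_of_tendsto_nhds
    simpa using ((Filter.tendsto_id (x := nhds (0 : ℝ))).const_mul 2).mul_const ‖W‖
  exact squeeze_zero_norm' (eventually_nhdsWithin_of_forall hbound) hlim

/-- Key step of Theorem 3.3: if `V̂ ∈ range H` and `Y ε = ε (H + ε I)⁻¹ V̂` (i.e.
`(H + εI)(Y ε) = ε V̂`) for `ε > 0`, then `Y ε → 0` in norm as `ε → 0⁺`. -/
theorem stmt_8 {𝓗 : Type*} [NormedAddCommGroup 𝓗] [InnerProductSpace ℝ 𝓗] [CompleteSpace 𝓗]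
    (H : 𝓗 →L[ℝ] 𝓗)
    (hsa : ∀ x y : 𝓗, ⟪H x, y⟫ = ⟪x, H y⟫)
    (hpsd : ∀ x : 𝓗, 0 ≤ ⟪H x, x⟫)
    (Vhat : 𝓗) (hVhat : Vhat ∈ LinearMap.range (H : 𝓗 →ₗ[ℝ] 𝓗))
    (Y : ℝ → 𝓗) (hY : ∀ ε : ℝ, 0 < ε → H (Y ε) + ε • Y ε = ε • Vhat) :
    Filter.Tendsto Y (nhdsWithin 0 (Set.Ioi 0)) (nhds 0) :=
  stmt_8_general H hpsd Vhat hVhat Y hY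
end

section
/- Let Ω ⊂ ℝᵈ be a bounded measurable set, u, λ : ℝᵈ → ℝ continuously differentiable with bounded gradients, and V : ℝᵈ → ℝᵈ a continuously differentiable vector field with compact support. Define for small t the pulled-back Dirichlet form e(t) := ∫_Ω det(1 + t·DV(x)) · ⟨ ((1 + t·DV(x))⁻¹)ᵀ ∇u(x), ((1 + t·DV(x))⁻¹)ᵀ ∇λ(x) ⟩ dx. Then e is differentiable at t = 0 with e′(0) = ∫_Ω ( div V(x) · ⟨∇u(x), ∇λ(x)⟩ − ⟨∇u(x), (DV(x) + DV(x)ᵀ) ∇λ(x)⟩ ) dx. -/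
/-!
The integrand is `G (t, DV x, ∇u x, ∇λ x)` for the fixed function
`G (t, A, a, b) = det (1 + t A) ⟨(1 + t A)⁻ᵀ a, (1 + t A)⁻ᵀ b⟩`, which is `C¹` on the open set
where `1 + t A` is invertible. Since `V` has compact support and the gradients are bounded, the
parameters `(DV x, ∇u x, ∇λ x)` stay in a compact set `K`; `{0} × K` then has a tube
neighbourhood on which `∂ₜ G` is bounded, so one may differentiate under the integral over the
finite-measure set `Ω`. At `t = 0`, `d/dt det (1 + t A) = tr A` and `d/dt (1 + t A)⁻¹ = -A`,
which produces the integrand of `e′(0)`.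
-/

open Matrix MeasureTheory Set Metric

-- `Matrix` carries no global norm; any choice would do, since only the induced topology matters.
attribute [local instance] Matrix.linftyOpNormedRing Matrix.linftyOpNormedAlgebra

section MatrixCalculus
variable {𝕜 : Type*} [RCLike 𝕜] {n : Type*} [Fintype n]

theorem Matrix.transpose_mulVec_dotProduct_transpose_mulVec (R : Matrix n n 𝕜) (a b : n → 𝕜) :
    (Rᵀ *ᵥ a) ⬝ᵥ (Rᵀ *ᵥ b) = a ⬝ᵥ (R * Rᵀ) *ᵥ b := by
  rw [mulVec_transpose, ← dotProduct_mulVec, mulVec_mulVec]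

variable [DecidableEq n] {k : WithTop ℕ∞}

theorem contDiff_matrix_elem (i j : n) : ContDiff 𝕜 k fun M : Matrix n n 𝕜 => M i j :=
  (LinearMap.toContinuousLinearMap (entryLinearMap 𝕜 𝕜 i j)).contDiff

theorem contDiff_matrix_transpose : ContDiff 𝕜 k (transpose : Matrix n n 𝕜 → Matrix n n 𝕜) :=
  (LinearMap.toContinuousLinearMap (transposeLinearEquiv n n 𝕜 𝕜).toLinearMap).contDiff

theorem contDiff_matrix_det : ContDiff 𝕜 k (det : Matrix n n 𝕜 → 𝕜) := by
  simp_rw [funext det_apply']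
  exact ContDiff.sum fun σ _ =>
    contDiff_const.mul <| contDiff_prod fun i _ => contDiff_matrix_elem _ _

theorem contDiffAt_matrix_inv {A : Matrix n n 𝕜} (hA : IsUnit A) :
    ContDiffAt 𝕜 k (fun M : Matrix n n 𝕜 => M⁻¹) A := by
  obtain ⟨u, rfl⟩ := hA
  rw [show (fun M : Matrix n n 𝕜 => M⁻¹) = Ring.inverse from funext nonsing_inv_eq_ringInverse]
  exact contDiffAt_ringInverse 𝕜 u

theorem contDiff_dotProduct_mulVec :
    ContDiff 𝕜 k fun q : (n → 𝕜) × Matrix n n 𝕜 × (n → 𝕜) => q.1 ⬝ᵥ q.2.1 *ᵥ q.2.2 := by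
  simp only [dotProduct, mulVec]
  refine ContDiff.sum fun i _ => ((contDiff_apply 𝕜 𝕜 i).comp contDiff_fst).mul <|
    ContDiff.sum fun j _ => ?_
  exact ((contDiff_matrix_elem i j).comp (contDiff_fst.comp contDiff_snd)).mul
    ((contDiff_apply 𝕜 𝕜 j).comp (contDiff_snd.comp contDiff_snd))

theorem HasDerivAt.dotProduct_mulVec {M : 𝕜 → Matrix n n 𝕜} {M' : Matrix n n 𝕜} {s : 𝕜}
    (hM : HasDerivAt M M' s) (a b : n → 𝕜) :
    HasDerivAt (fun t => a ⬝ᵥ M t *ᵥ b) (a ⬝ᵥ M' *ᵥ b) s :=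
  let L : Matrix n n 𝕜 →ₗ[𝕜] 𝕜 :=
    { toFun := fun M => a ⬝ᵥ M *ᵥ b
      map_add' := by simp [add_mulVec, dotProduct_add]
      map_smul' := by simp [smul_mulVec, dotProduct_smul] }
  (LinearMap.toContinuousLinearMap L).hasFDerivAt.comp_hasDerivAt s hM

theorem hasDerivAt_det_one_add_smul_zero (A : Matrix n n 𝕜) :
    HasDerivAt (fun s : 𝕜 => (1 + s • A).det) A.trace 0 := by
  set p := (det (1 + (Polynomial.X : Polynomial 𝕜) • A.map Polynomial.C)).divX.divX
  have h : HasDerivAt (fun s : 𝕜 => 1 + A.trace * s + p.eval s * s ^ 2) A.trace 0 := by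
    refine ((((hasDerivAt_id' (0 : 𝕜)).const_mul A.trace).const_add 1).fun_add
      ((p.hasDerivAt 0).fun_mul ((hasDerivAt_id' (0 : 𝕜)).fun_pow 2))).congr_deriv ?_
    simp
  exact h.congr_of_eventuallyEq (.of_forall fun s => det_one_add_smul s A)

theorem hasDerivAt_inv_one_add_smul_zero (A : Matrix n n 𝕜) :
    HasDerivAt (fun s : 𝕜 => (1 + s • A)⁻¹) (-A) 0 := by
  have hB : HasDerivAt (fun s : 𝕜 => 1 + s • A) A 0 :=
    (((hasDerivAt_id' (0 : 𝕜)).smul_const A).const_add 1).congr_deriv (one_smul 𝕜 A)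
  have h := (hasFDerivAt_ringInverse (𝕜 := 𝕜) (1 : (Matrix n n 𝕜)ˣ)).comp_hasDerivAt_of_eq
    (0 : 𝕜) hB (by simp)
  simp only [Function.comp_def, ← nonsing_inv_eq_ringInverse, Units.val_one, inv_one] at h
  exact h.congr_deriv (by simp)

theorem isOpen_setOf_isUnit_one_add_smul {Y : Type*} [TopologicalSpace Y] :
    IsOpen {q : 𝕜 × Matrix n n 𝕜 × Y | IsUnit (1 + q.1 • q.2.1)} :=
  Units.isOpen.preimage (continuous_const.add (continuous_fst.smul continuous_snd.fst))

end MatrixCalculus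

section DirichletPullback
variable {𝕜 : Type*} [RCLike 𝕜] {n : Type*} [Fintype n] [DecidableEq n]

noncomputable def dirichletPullback (t : 𝕜) (A : Matrix n n 𝕜) (a b : n → 𝕜) : 𝕜 :=
  (1 + t • A).det * ((((1 + t • A)⁻¹)ᵀ *ᵥ a) ⬝ᵥ (((1 + t • A)⁻¹)ᵀ *ᵥ b))

theorem dirichletPullback_eq (t : 𝕜) (A : Matrix n n 𝕜) (a b : n → 𝕜) :
    dirichletPullback t A a b =
      (1 + t • A).det * (a ⬝ᵥ ((1 + t • A)⁻¹ * (1 + t • Aᵀ)⁻¹) *ᵥ b) := by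
  rw [dirichletPullback, transpose_mulVec_dotProduct_transpose_mulVec, transpose_nonsing_inv,
    transpose_add, transpose_one, transpose_smul]

theorem hasDerivAt_dirichletPullback_zero (A : Matrix n n 𝕜) (a b : n → 𝕜) :
    HasDerivAt (fun t => dirichletPullback t A a b)
      (A.trace * (a ⬝ᵥ b) - a ⬝ᵥ (A + Aᵀ) *ᵥ b) 0 := by
  have hR := ((hasDerivAt_inv_one_add_smul_zero A).fun_mul
    (hasDerivAt_inv_one_add_smul_zero Aᵀ)).dotProduct_mulVec a b
  simp_rw [dirichletPullback_eq]
  refine ((hasDerivAt_det_one_add_smul_zero A).fun_mul hR).congr_deriv ?_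
  simp [add_mulVec, neg_mulVec, dotProduct_add, dotProduct_neg]
  ring

theorem contDiffOn_dirichletPullback {k : WithTop ℕ∞} :
    ContDiffOn 𝕜 k (fun q : 𝕜 × Matrix n n 𝕜 × (n → 𝕜) × (n → 𝕜) =>
      dirichletPullback q.1 q.2.1 q.2.2.1 q.2.2.2) {q | IsUnit (1 + q.1 • q.2.1)} := by
  intro q hq
  refine ContDiffAt.contDiffWithinAt ?_
  simp_rw [dirichletPullback_eq]
  have hB : ContDiff 𝕜 k fun q : 𝕜 × Matrix n n 𝕜 × (n → 𝕜) × (n → 𝕜) => 1 + q.1 • q.2.1 :=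
    contDiff_const.add (contDiff_fst.smul contDiff_snd.fst)
  have hBt : ContDiff 𝕜 k fun q : 𝕜 × Matrix n n 𝕜 × (n → 𝕜) × (n → 𝕜) => 1 + q.1 • q.2.1ᵀ :=
    contDiff_const.add (contDiff_fst.smul (contDiff_matrix_transpose.comp contDiff_snd.fst))
  have hqt : IsUnit (1 + q.1 • q.2.1ᵀ) := by
    rw [← transpose_one, ← transpose_smul, ← transpose_add, isUnit_transpose]
    exact hq
  have hM := ((contDiffAt_matrix_inv hq).comp q hB.contDiffAt).mul
    ((contDiffAt_matrix_inv hqt).comp q hBt.contDiffAt)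
  exact (contDiff_matrix_det.comp hB).contDiffAt.mul (contDiff_dotProduct_mulVec.contDiffAt.comp q
    (contDiffAt_snd.snd.fst.prodMk (hM.prodMk contDiffAt_snd.snd.snd)))

end DirichletPullback

section FDerivCoordinates
variable {𝕜 : Type*} [NontriviallyNormedField 𝕜] {m n : Type*} [Fintype n] [DecidableEq n]

theorem apply_eq_fderiv_apply_single_of_fderiv_eq_dotProduct {f : (n → 𝕜) → 𝕜}
    {G : (n → 𝕜) → n → 𝕜} (hG : ∀ x h, fderiv 𝕜 f x h = G x ⬝ᵥ h) (x : n → 𝕜) (i : n) :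
    G x i = fderiv 𝕜 f x (Pi.single i 1) := by
  rw [hG, dotProduct_single, mul_one]

theorem entry_eq_fderiv_apply_single_of_fderiv_eq_mulVec {f : (n → 𝕜) → m → 𝕜}
    {M : (n → 𝕜) → Matrix m n 𝕜} (hM : ∀ x h, fderiv 𝕜 f x h = M x *ᵥ h) (x : n → 𝕜)
    (i : m) (j : n) : M x i j = fderiv 𝕜 f x (Pi.single j 1) i := by
  simp [hM]

theorem continuous_of_fderiv_eq_dotProduct {f : (n → 𝕜) → 𝕜} {G : (n → 𝕜) → n → 𝕜}
    (hf : ContDiff 𝕜 1 f) (hG : ∀ x h, fderiv 𝕜 f x h = G x ⬝ᵥ h) : Continuous G := by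
  simp_rw [continuous_pi_iff, apply_eq_fderiv_apply_single_of_fderiv_eq_dotProduct hG]
  exact fun i => (hf.continuous_fderiv one_ne_zero).clm_apply continuous_const

theorem continuous_of_fderiv_eq_mulVec [Fintype m] {f : (n → 𝕜) → m → 𝕜}
    {M : (n → 𝕜) → Matrix m n 𝕜} (hf : ContDiff 𝕜 1 f) (hM : ∀ x h, fderiv 𝕜 f x h = M x *ᵥ h) :
    Continuous M := by
  refine continuous_matrix fun i j => ?_
  simp_rw [entry_eq_fderiv_apply_single_of_fderiv_eq_mulVec hM]
  exact (continuous_apply i).comp ((hf.continuous_fderiv one_ne_zero).clm_apply continuous_const)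

theorem hasCompactSupport_of_fderiv_eq_mulVec {f : (n → 𝕜) → m → 𝕜}
    {M : (n → 𝕜) → Matrix m n 𝕜} (hf : HasCompactSupport f)
    (hM : ∀ x h, fderiv 𝕜 f x h = M x *ᵥ h) : HasCompactSupport M := by
  refine (hf.fderiv 𝕜).mono fun x hx hfx => hx ?_
  ext i j
  simp [entry_eq_fderiv_apply_single_of_fderiv_eq_mulVec hM, show fderiv 𝕜 f x = 0 from hfx]

end FDerivCoordinates

theorem hasDerivAt_integral_of_contDiffOn {X E F : Type*} [TopologicalSpace X]
    [MeasurableSpace X] [OpensMeasurableSpace X] {μ : Measure X} [IsFiniteMeasure μ]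
    [NormedAddCommGroup E] [NormedSpace ℝ E] [NormedAddCommGroup F] [NormedSpace ℝ F]
    [SecondCountableTopologyEither X F]
    {G : ℝ × E → F} {U : Set (ℝ × E)} (hU : IsOpen U) (hG : ContDiffOn ℝ 1 G U)
    {K : Set E} (hK : IsCompact K) {t₀ : ℝ} (hKU : ∀ p ∈ K, (t₀, p) ∈ U)
    {g : X → E} (hg : Continuous g) (hgK : ∀ x, g x ∈ K)
    {G' : E → F} (hG' : ∀ p ∈ K, HasDerivAt (fun t => G (t, p)) (G' p) t₀) :
    HasDerivAt (fun t => ∫ x, G (t, g x) ∂μ) (∫ x, G' (g x) ∂μ) t₀ := by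
  obtain ⟨u, v, hu, -, ht₀u, hKv, huvU⟩ := generalized_tube_lemma isCompact_singleton hK hU
    (by rintro ⟨t, p⟩ ⟨rfl, hp⟩; exact hKU p hp)
  obtain ⟨δ, hδ, hδu⟩ := Metric.mem_nhds_iff.1 (hu.mem_nhds (ht₀u rfl))
  set S := closedBall t₀ (δ / 2) ×ˢ K
  have hSU : S ⊆ U := fun q hq =>
    huvU ⟨hδu (closedBall_subset_ball (half_lt_self hδ) hq.1), hKv hq.2⟩
  have hmem : ∀ t ∈ ball t₀ (δ / 2), ∀ x, (t, g x) ∈ S := fun t ht x =>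
    ⟨ball_subset_closedBall ht, hgK x⟩
  have ht₀ : t₀ ∈ ball t₀ (δ / 2) := mem_ball_self (half_pos hδ)
  have hcomp : ∀ {H : ℝ × E → F}, ContinuousOn H U → ∀ t ∈ ball t₀ (δ / 2),
      Continuous fun x => H (t, g x) := fun hH t ht =>
    hH.comp_continuous (continuous_const.prodMk hg) fun x => hSU (hmem t ht x)
  set D : ℝ × E → F := fun q => fderiv ℝ G q (1, 0)
  have hD : ContinuousOn D U :=
    (hG.continuousOn_fderiv_of_isOpen hU le_rfl).clm_apply continuousOn_const
  have hderiv : ∀ q ∈ U, HasDerivAt (fun t => G (t, q.2)) (D q) q.1 := fun q hq =>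
    ((hG.differentiableOn one_ne_zero q hq).differentiableAt (hU.mem_nhds hq)).hasFDerivAt
      |>.comp_hasDerivAt_of_eq q.1 ((hasDerivAt_id q.1).prodMk (hasDerivAt_const q.1 q.2)) rfl
  have hSc : IsCompact S := (isCompact_closedBall _ _).prod hK
  obtain ⟨C₀, hC₀⟩ := hSc.exists_bound_of_continuousOn (hG.continuousOn.mono hSU)
  obtain ⟨C, hC⟩ := hSc.exists_bound_of_continuousOn (hD.mono hSU)
  have key := hasDerivAt_integral_of_dominated_loc_of_deriv_le (μ := μ)
    (F := fun t x => G (t, g x)) (F' := fun t x => D (t, g x)) (bound := fun _ => C)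
    (ball_mem_nhds t₀ (half_pos hδ))
    (Filter.eventually_of_mem (ball_mem_nhds t₀ (half_pos hδ)) fun t ht =>
      (hcomp hG.continuousOn t ht).aestronglyMeasurable)
    (Integrable.of_bound (hcomp hG.continuousOn t₀ ht₀).aestronglyMeasurable C₀
      (.of_forall fun x => hC₀ _ (hmem t₀ ht₀ x)))
    (hcomp hD t₀ ht₀).aestronglyMeasurable (.of_forall fun x t ht => hC _ (hmem t ht x))
    (integrable_const C) (.of_forall fun x t ht => hderiv _ (hSU (hmem t ht x)))
  have hD' : ∀ x, D (t₀, g x) = G' (g x) := fun x =>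
    (hderiv _ (hKU _ (hgK x))).unique (hG' _ (hgK x))
  simpa only [hD'] using key.2

theorem stmt_15_general (d : ℕ) (Ω : Set (Fin d → ℝ))
    (hΩb : Bornology.IsBounded Ω)
    (u lam : (Fin d → ℝ) → ℝ) (Gu Gl : (Fin d → ℝ) → (Fin d → ℝ))
    (hu : ContDiff ℝ 1 u) (hlam : ContDiff ℝ 1 lam)
    (hGu : ∀ x h, fderiv ℝ u x h = Gu x ⬝ᵥ h)
    (hGl : ∀ x h, fderiv ℝ lam x h = Gl x ⬝ᵥ h)
    (hGub : ∃ M : ℝ, ∀ x, ‖Gu x‖ ≤ M) (hGlb : ∃ M : ℝ, ∀ x, ‖Gl x‖ ≤ M)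
    (V : (Fin d → ℝ) → (Fin d → ℝ)) (DV : (Fin d → ℝ) → Matrix (Fin d) (Fin d) ℝ)
    (hV : ContDiff ℝ 1 V) (hVc : HasCompactSupport V)
    (hDV : ∀ x h, fderiv ℝ V x h = DV x *ᵥ h) :
    HasDerivAt (fun t : ℝ => ∫ x in Ω,
        (1 + t • DV x).det *
          ((((1 + t • DV x)⁻¹)ᵀ *ᵥ Gu x) ⬝ᵥ (((1 + t • DV x)⁻¹)ᵀ *ᵥ Gl x)))
      (∫ x in Ω,
        (DV x).trace * (Gu x ⬝ᵥ Gl x) - Gu x ⬝ᵥ ((DV x + (DV x)ᵀ) *ᵥ Gl x)) 0 := by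
  obtain ⟨Mu, hMu⟩ := hGub
  obtain ⟨Ml, hMl⟩ := hGlb
  have : IsFiniteMeasure (volume.restrict Ω) := isFiniteMeasure_restrict.2 hΩb.measure_lt_top.ne
  have hDVc : Continuous DV := continuous_of_fderiv_eq_mulVec hV hDV
  have hK : IsCompact
      (range DV ×ˢ closedBall (0 : Fin d → ℝ) Mu ×ˢ closedBall (0 : Fin d → ℝ) Ml) :=
    ((hasCompactSupport_of_fderiv_eq_mulVec hVc hDV).isCompact_range hDVc).prod
      ((isCompact_closedBall _ _).prod (isCompact_closedBall _ _))
  have hg : Continuous fun x => (DV x, Gu x, Gl x) :=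
    hDVc.prodMk ((continuous_of_fderiv_eq_dotProduct hu hGu).prodMk
      (continuous_of_fderiv_eq_dotProduct hlam hGl))
  have key := hasDerivAt_integral_of_contDiffOn (μ := volume.restrict Ω)
    (G := fun q : ℝ × Matrix (Fin d) (Fin d) ℝ × (Fin d → ℝ) × (Fin d → ℝ) =>
      dirichletPullback q.1 q.2.1 q.2.2.1 q.2.2.2)
    isOpen_setOf_isUnit_one_add_smul contDiffOn_dirichletPullback hK (fun _ _ => by simp) hg
    (fun x => ⟨mem_range_self x, mem_closedBall_zero_iff.2 (hMu x),
      mem_closedBall_zero_iff.2 (hMl x)⟩)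
    (fun p _ => hasDerivAt_dirichletPullback_zero p.1 p.2.1 p.2.2)
  exact key

/-- Derivative of the pulled-back Dirichlet form: with gradients `Gu, Gl` of `u, λ`,
Jacobian matrix `DV` of the `C¹` compactly supported vector field `V`, the map
`e(t) = ∫_Ω det(1 + t DV) ⟨(1 + t DV)⁻ᵀ ∇u, (1 + t DV)⁻ᵀ ∇λ⟩` is differentiable at `0`
with `e′(0) = ∫_Ω (div V ⟨∇u,∇λ⟩ − ⟨∇u, (DV + DVᵀ)∇λ⟩)`. -/
theorem stmt_15 (d : ℕ) (Ω : Set (Fin d → ℝ))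
    (hΩm : MeasurableSet Ω) (hΩb : Bornology.IsBounded Ω)
    (u lam : (Fin d → ℝ) → ℝ) (Gu Gl : (Fin d → ℝ) → (Fin d → ℝ))
    (hu : ContDiff ℝ 1 u) (hlam : ContDiff ℝ 1 lam)
    (hGu : ∀ x h, fderiv ℝ u x h = Gu x ⬝ᵥ h)
    (hGl : ∀ x h, fderiv ℝ lam x h = Gl x ⬝ᵥ h)
    (hGub : ∃ M : ℝ, ∀ x, ‖Gu x‖ ≤ M) (hGlb : ∃ M : ℝ, ∀ x, ‖Gl x‖ ≤ M)
    (V : (Fin d → ℝ) → (Fin d → ℝ)) (DV : (Fin d → ℝ) → Matrix (Fin d) (Fin d) ℝ)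
    (hV : ContDiff ℝ 1 V) (hVc : HasCompactSupport V)
    (hDV : ∀ x h, fderiv ℝ V x h = DV x *ᵥ h) :
    HasDerivAt (fun t : ℝ => ∫ x in Ω,
        (1 + t • DV x).det *
          ((((1 + t • DV x)⁻¹)ᵀ *ᵥ Gu x) ⬝ᵥ (((1 + t • DV x)⁻¹)ᵀ *ᵥ Gl x)))
      (∫ x in Ω,
        (DV x).trace * (Gu x ⬝ᵥ Gl x) - Gu x ⬝ᵥ ((DV x + (DV x)ᵀ) *ᵥ Gl x)) 0 :=
  stmt_15_general d Ω hΩb u lam Gu Gl hu hlam hGu hGl hGub hGlb V DV hV hVc hDV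
end
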